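/- arXiv:2502.20917 — 2 statements merged into one kernel-verified Lean document; each statement's English description precedes it below -/
import Mathlib

section
/- (Corollary to Theorem 1.) Fix a critical value c, a parameter value θ₀ ∈ ℝ, and α ∈ (0, 0.5). Then there exists δ > 0 such that for every observed value x with c < x < c + δ, the point θ₀ does not lie in the conditional confidence interval [θₓ(1 − α/2), θₓ(α/2)], where for each p ∈ (0,1), θₓ(p) is the unique solution θ of F(x; θ, c) = p. -/
open Filter Set

/-- The standard normal CDF `Φ(t) = (2π)^{−1/2} ∫_{−∞}^t exp(−s²/2) ds`. -/
noncomputable def Phi (t : ℝ) : ℝ :=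
  (Real.sqrt (2 * Real.pi))⁻¹ * ∫ s in Set.Iic t, Real.exp (-(s ^ 2) / 2)

/-- The truncated-normal distribution function
    `F(a; θ, c) := (Φ(a − θ) − Φ(c − θ)) / (1 − Φ(c − θ))`. -/
noncomputable def F (a θ c : ℝ) : ℝ :=
  (Phi (a - θ) - Phi (c - θ)) / (1 - Phi (c - θ))

open MeasureTheory in
lemma g_eq : (fun s : ℝ => Real.exp (-(s ^ 2) / 2)) = fun s => Real.exp (-(1/2 : ℝ) * s ^ 2) := by
  funext s; ring_nf

open MeasureTheory in
lemma integrable_g : Integrable (fun s : ℝ => Real.exp (-(s ^ 2) / 2)) := by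
  rw [g_eq]; exact integrable_exp_neg_mul_sq (by norm_num)

lemma integral_g : (∫ s : ℝ, Real.exp (-(s ^ 2) / 2)) = Real.sqrt (2 * Real.pi) := by
  rw [g_eq, integral_gaussian]
  rw [show Real.pi / (1/2) = 2 * Real.pi by ring]

lemma sqrt2pi_pos : 0 < Real.sqrt (2 * Real.pi) :=
  Real.sqrt_pos.mpr (by positivity)

open MeasureTheory in
lemma Phi_mono : Monotone Phi := by
  intro a b hab
  unfold Phi
  refine mul_le_mul_of_nonneg_left ?_ (by positivity)
  exact setIntegral_mono_set integrable_g.integrableOn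
    (Filter.Eventually.of_forall fun s => (Real.exp_pos _).le)
    (HasSubset.Subset.eventuallyLE (Iic_subset_Iic.mpr hab))

open MeasureTheory in
lemma Phi_lt_one (t : ℝ) : Phi t < 1 := by
  unfold Phi
  rw [inv_mul_lt_iff₀ sqrt2pi_pos, mul_one, ← integral_g]
  have h1 : (∫ s : ℝ, Real.exp (-(s ^ 2) / 2)) =
      (∫ s in Set.Iic t, Real.exp (-(s ^ 2) / 2)) + ∫ s in Set.Ioi t, Real.exp (-(s ^ 2) / 2) := by
    rw [← setIntegral_union (Set.Iic_disjoint_Ioi le_rfl) measurableSet_Ioi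
      integrable_g.integrableOn integrable_g.integrableOn, Set.Iic_union_Ioi,
      setIntegral_univ]
  have h2 : 0 < ∫ s in Set.Ioi t, Real.exp (-(s ^ 2) / 2) := by
    apply setIntegral_pos_iff_support_of_nonneg_ae ?_ integrable_g.integrableOn |>.mpr
    · simp [Function.support, Real.exp_ne_zero]
    · exact Filter.Eventually.of_forall fun s => (Real.exp_pos _).le
  linarith

open MeasureTheory in
lemma Phi_num_le {a b : ℝ} (hab : a ≤ b) :
    Phi b - Phi a ≤ (Real.sqrt (2 * Real.pi))⁻¹ * (b - a) := by
  unfold Phi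
  rw [← mul_sub]
  refine mul_le_mul_of_nonneg_left ?_ (by positivity)
  rw [intervalIntegral.integral_Iic_sub_Iic integrable_g.integrableOn integrable_g.integrableOn]
  calc (∫ s in a..b, Real.exp (-(s ^ 2) / 2))
      ≤ |∫ s in a..b, Real.exp (-(s ^ 2) / 2)| := le_abs_self _
    _ ≤ 1 * |b - a| := by
        rw [← Real.norm_eq_abs]
        apply intervalIntegral.norm_integral_le_of_norm_le_const
        intro s _
        rw [Real.norm_eq_abs, abs_of_pos (Real.exp_pos _)]
        exact Real.exp_le_one_iff.mpr (by nlinarith [sq_nonneg s])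
    _ = b - a := by rw [one_mul, abs_of_nonneg (by linarith)]

/-- (Corollary to Theorem 1.) Fix `c`, `θ₀ ∈ ℝ`, and `α ∈ (0, 0.5)`. There exists
`δ > 0` such that for every observed `x` with `c < x < c + δ`, the point `θ₀` does
not lie in the conditional confidence interval `[θₓ(1 − α/2), θₓ(α/2)]`, where
`θₓ(p)` is the (unique) solution `θ` of `F(x; θ, c) = p`. -/
theorem stmt_4 (c θ₀ α : ℝ) (hα : α ∈ Set.Ioo (0 : ℝ) 0.5) :
    ∃ δ > (0 : ℝ), ∀ x : ℝ, c < x → x < c + δ →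
      ∀ θL θU : ℝ, F x θL c = 1 - α / 2 → F x θU c = α / 2 →
        θ₀ ∉ Set.Icc θL θU := by
  obtain ⟨hα0, hα1⟩ := hα
  set D : ℝ := 1 - Phi (c - θ₀) with hD
  have hDpos : 0 < D := by have := Phi_lt_one (c - θ₀); linarith
  refine ⟨α / 2 * D * Real.sqrt (2 * Real.pi), by positivity, ?_⟩
  intro x hcx hxδ θL θU hL hU hmem
  obtain ⟨hθL, hθU⟩ := hmem
  -- θ₀ ≤ θU, so c - θU ≤ c - θ₀, so Phi (c - θU) ≤ Phi (c - θ₀)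
  have hden : D ≤ 1 - Phi (c - θU) := by
    have := Phi_mono (show c - θU ≤ c - θ₀ by linarith)
    simp only [hD]; linarith
  have hdenpos : 0 < 1 - Phi (c - θU) := lt_of_lt_of_le hDpos hden
  have hnum : Phi (x - θU) - Phi (c - θU) ≤ (Real.sqrt (2 * Real.pi))⁻¹ * (x - c) := by
    have := Phi_num_le (show c - θU ≤ x - θU by linarith)
    simpa using this
  have hFle : F x θU c ≤ (Real.sqrt (2 * Real.pi))⁻¹ * (x - c) / D := by
    unfold F
    exact div_le_div₀ (mul_nonneg (by positivity) (by linarith)) hnum hDpos hden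
  rw [hU] at hFle
  have hxc : x - c < α / 2 * D * Real.sqrt (2 * Real.pi) := by linarith
  have h1 : 0 < (Real.sqrt (2 * Real.pi))⁻¹ := by positivity
  have hlt : (Real.sqrt (2 * Real.pi))⁻¹ * (x - c) / D < α / 2 := by
    rw [div_lt_iff₀ hDpos]
    calc (Real.sqrt (2 * Real.pi))⁻¹ * (x - c)
        < (Real.sqrt (2 * Real.pi))⁻¹ * (α / 2 * D * Real.sqrt (2 * Real.pi)) := by
          exact mul_lt_mul_of_pos_left hxc h1
      _ = α / 2 * D := by
          field_simp
  linarith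
end

section
/- Fix a critical value c and p ∈ (0, 1). If the observed value x satisfies x > c and x < Φ⁻¹((1 − Φ(c))·p + Φ(c)), then any θ ∈ ℝ with F(x; θ, c) = p satisfies θ < 0. (In particular, the conditional quantile is negative even though the observed t-statistic is significantly positive.) -/
/-!
Write `1 - F(x; θ, c) = (1 - Φ(x - θ)) / (1 - Φ(c - θ))`. For `c ≤ x` this ratio is nondecreasing
in `θ`: its derivative has the sign of `φ(x - θ)(1 - Φ(c - θ)) - φ(c - θ)(1 - Φ(x - θ))`, which is
nonnegative because the Gaussian hazard rate `φ / (1 - Φ)` is nondecreasing, a consequence of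
`φ(a) φ(s) ≤ φ(b) φ(s + a - b)` for `a ≤ b ≤ s`. Hence `θ ≥ 0` would give
`p = F(x; θ, c) ≤ F(x; 0, c)`, while `x < Φ⁻¹((1 - Φ(c)) p + Φ(c))` says exactly `F(x; 0, c) < p`.
-/

open Filter Set

/-- The inverse of the standard normal CDF on `(0,1)`. -/
noncomputable def PhiInv : ℝ → ℝ := Function.invFun Phi

open MeasureTheory ProbabilityTheory

local notation "φ" => gaussianPDFReal 0 1

lemma Phi_eq_setIntegral (t : ℝ) : Phi t = ∫ s in Iic t, φ s := by
  simp [Phi, gaussianPDFReal, integral_const_mul]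

lemma Phi_eq_cdf : Phi = cdf (gaussianReal 0 1) := by
  ext t
  rw [cdf_eq_real, measureReal_def, gaussianReal_apply_eq_integral _ one_ne_zero,
    ENNReal.toReal_ofReal
      (setIntegral_nonneg measurableSet_Iic fun _ _ ↦ gaussianPDFReal_nonneg ..),
    Phi_eq_setIntegral]

lemma one_sub_Phi (t : ℝ) : 1 - Phi t = ∫ s in Ioi t, φ s := by
  have hφ := integrable_gaussianPDFReal 0 1
  rw [← integral_gaussianPDFReal_eq_one 0 one_ne_zero,
    ← intervalIntegral.integral_Iic_add_Ioi hφ.integrableOn hφ.integrableOn, Phi_eq_setIntegral,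
    add_sub_cancel_left]

lemma continuous_gaussianPDFReal (μ : ℝ) (v : NNReal) : Continuous (gaussianPDFReal μ v) := by
  unfold gaussianPDFReal; fun_prop

lemma hasDerivAt_Phi (t : ℝ) : HasDerivAt Phi (φ t) t := by
  have hφ := integrable_gaussianPDFReal 0 1
  have hPhi : Phi = fun u ↦ Phi 0 + ∫ s in (0 : ℝ)..u, φ s := by
    ext u
    rw [Phi_eq_setIntegral, Phi_eq_setIntegral,
      ← intervalIntegral.integral_Iic_sub_Iic hφ.integrableOn hφ.integrableOn, add_sub_cancel]
  rw [hPhi]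
  exact ((continuous_gaussianPDFReal 0 1).integral_hasStrictDerivAt 0 t).hasDerivAt.const_add _

lemma strictMono_Phi : StrictMono Phi :=
  strictMono_of_deriv_pos fun t ↦ (hasDerivAt_Phi t).deriv ▸ gaussianPDFReal_pos _ _ _ one_ne_zero

lemma continuous_Phi : Continuous Phi :=
  continuous_iff_continuousAt.2 fun t ↦ (hasDerivAt_Phi t).continuousAt

lemma tendsto_Phi_atBot : Tendsto Phi atBot (nhds 0) := Phi_eq_cdf ▸ tendsto_cdf_atBot _

lemma tendsto_Phi_atTop : Tendsto Phi atTop (nhds 1) := Phi_eq_cdf ▸ tendsto_cdf_atTop _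

lemma Phi_mem_Ioo (t : ℝ) : Phi t ∈ Ioo 0 1 :=
  ⟨(strictMono_Phi.monotone.le_of_tendsto tendsto_Phi_atBot (t - 1)).trans_lt
      (strictMono_Phi (sub_one_lt t)),
    (strictMono_Phi (lt_add_one t)).trans_le
      (strictMono_Phi.monotone.ge_of_tendsto tendsto_Phi_atTop (t + 1))⟩

lemma Phi_PhiInv {y : ℝ} (hy : y ∈ Ioo 0 1) : Phi (PhiInv y) = y :=
  Function.invFun_eq <| mem_range_of_exists_le_of_exists_ge continuous_Phi
    ((tendsto_Phi_atBot.eventually (eventually_lt_nhds hy.1)).exists.imp fun _ ↦ le_of_lt)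
    ((tendsto_Phi_atTop.eventually (eventually_gt_nhds hy.2)).exists.imp fun _ ↦ le_of_lt)

lemma setIntegral_Ioi_comp_add_right {E : Type*} [NormedAddCommGroup E] [NormedSpace ℝ E]
    (f : ℝ → E) (a d : ℝ) : ∫ s in Ioi (a - d), f (s + d) = ∫ s in Ioi a, f s := by
  rw [← preimage_add_const_Ioi]
  exact (measurePreserving_add_right volume d).setIntegral_preimage_emb
    (measurableEmbedding_addRight d) f _

lemma gaussianPDFReal_mul_le {a b s : ℝ} (hab : a ≤ b) (hbs : b ≤ s) :
    φ a * φ s ≤ φ b * φ (s + (a - b)) := by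
  simp only [gaussianPDFReal, NNReal.coe_one, sub_zero, mul_one]
  rw [mul_mul_mul_comm, mul_mul_mul_comm _ (Real.exp _), ← Real.exp_add, ← Real.exp_add]
  gcongr ?_ * Real.exp ?_
  -- the two exponents differ by `(b - a) * (s - b)`
  nlinarith [mul_nonneg (sub_nonneg.2 hab) (sub_nonneg.2 hbs)]

lemma gaussianPDFReal_mul_one_sub_Phi_le {a b : ℝ} (hab : a ≤ b) :
    φ a * (1 - Phi b) ≤ φ b * (1 - Phi a) := by
  have hφ := integrable_gaussianPDFReal 0 1
  rw [one_sub_Phi, one_sub_Phi, ← integral_const_mul, ← integral_const_mul,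
    ← setIntegral_Ioi_comp_add_right _ a (a - b), sub_sub_cancel]
  refine setIntegral_mono_on (hφ.const_mul _).integrableOn
    ((hφ.comp_add_right _).const_mul _).integrableOn measurableSet_Ioi fun s hs ↦ ?_
  exact gaussianPDFReal_mul_le hab (le_of_lt hs)

lemma hasDerivAt_one_sub_Phi_const_sub (a θ : ℝ) :
    HasDerivAt (fun θ ↦ 1 - Phi (a - θ)) (φ (a - θ)) θ := by
  simpa using ((hasDerivAt_Phi (a - θ)).comp θ ((hasDerivAt_id θ).const_sub a)).const_sub 1

lemma monotone_one_sub_Phi_div {c x : ℝ} (hcx : c ≤ x) :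
    Monotone fun θ ↦ (1 - Phi (x - θ)) / (1 - Phi (c - θ)) := by
  have hderiv (θ : ℝ) : HasDerivAt (fun θ ↦ (1 - Phi (x - θ)) / (1 - Phi (c - θ)))
      ((φ (x - θ) * (1 - Phi (c - θ)) - (1 - Phi (x - θ)) * φ (c - θ)) / (1 - Phi (c - θ)) ^ 2) θ :=
    (hasDerivAt_one_sub_Phi_const_sub x θ).div (hasDerivAt_one_sub_Phi_const_sub c θ)
      (sub_pos.2 (Phi_mem_Ioo (c - θ)).2).ne'
  refine monotone_of_deriv_nonneg (fun θ ↦ (hderiv θ).differentiableAt) fun θ ↦ ?_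
  rw [(hderiv θ).deriv]
  have := gaussianPDFReal_mul_one_sub_Phi_le (sub_le_sub_right hcx θ)
  exact div_nonneg (by linarith) (sq_nonneg _)

lemma F_eq_one_sub_div (a θ c : ℝ) : F a θ c = 1 - (1 - Phi (a - θ)) / (1 - Phi (c - θ)) := by
  rw [F, eq_sub_iff_add_eq, ← add_div, div_eq_one_iff_eq (sub_pos.2 (Phi_mem_Ioo _).2).ne']
  ring

lemma antitone_F {a c : ℝ} (hca : c ≤ a) : Antitone fun θ ↦ F a θ c := fun _ _ h ↦ by
  simpa only [F_eq_one_sub_div, sub_le_sub_iff_left] using monotone_one_sub_Phi_div hca h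

/-- Fix `c` and `p ∈ (0,1)`. If `x > c` and `x < Φ⁻¹((1 − Φ(c))·p + Φ(c))`, then
any `θ` with `F(x; θ, c) = p` satisfies `θ < 0`. -/
theorem stmt_10 (c p x θ : ℝ) (hp : p ∈ Set.Ioo (0 : ℝ) 1)
    (hx₁ : c < x) (hx₂ : x < PhiInv ((1 - Phi c) * p + Phi c))
    (hθ : F x θ c = p) : θ < 0 := by
  obtain ⟨hp0, hp1⟩ := hp
  obtain ⟨hΦc0, hΦc1⟩ := Phi_mem_Ioo c
  have hy : (1 - Phi c) * p + Phi c ∈ Ioo 0 1 := ⟨by nlinarith, by nlinarith⟩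
  have hΦx : Phi x < (1 - Phi c) * p + Phi c := Phi_PhiInv hy ▸ strictMono_Phi hx₂
  have hF0 : F x 0 c < p := by
    rw [F, sub_zero, sub_zero, div_lt_iff₀ (sub_pos.2 hΦc1)]
    linarith
  by_contra! hθ0
  linarith [antitone_F hx₁.le hθ0]
end
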